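/- Let c ∈ (0,1) and s = √(1−c²). Then f(x) > f(−x) for all x ∈ (0, (1−c)²], where f(x) = (1/16)·( ((σ_3/64)x² + (c/4)x − s²)² − (1/16)(1 − σ_2 + 2σ_3)c²x² + (1/16)(2 − σ_1)x² − c(x − 8c) )² − (64 + u_1²u_2²u_3²x²)·( x/32 − c/8 − c³/8 + (σ_3/512)c x² )², with u_1 = √(2(2+√2)) − 1 − √2, u_2 = √(2+√2) − 1, u_3 = 1 + √2 − √(2+√2), σ_1 = (1−u_1²)+(1−u_2²)+(1−u_3²), σ_2 = (1−u_1²)(1−u_2²)+(1−u_1²)(1−u_3²)+(1−u_2²)(1−u_3²), σ_3 = (1−u_1²)(1−u_2²)(1−u_3²). -/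

import Mathlib

/-!
Substituting `s² = 1 − c²`, the difference `f(x) − f(−x)` factors as `c·x·g(x)` with
`g(x) = (1 − c²)²(5 + c²)/8 + a₂(c)·x² + a₄(c)·x⁴ + σ₃³·x⁶/2²¹`.
Each `uᵢ` lies in `[−1, 1]`, so the numbers `1 − uᵢ²` and `u₁²u₂²u₃²` lie in `[0, 1]`;
this crude information already gives `a₂, a₄ ≥ −1/4` for `c² ≤ 1`. Since
`(1 − c)² ≤ 1 − c²`, for `x` in the range considered the constant term `5(1 − c²)²/8`
dominates `x²/4 + x⁴/4`, hence `g(x) > 0`.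
-/

open Real

noncomputable def u1 : ℝ := Real.sqrt (2 * (2 + Real.sqrt 2)) - 1 - Real.sqrt 2

noncomputable def u2 : ℝ := Real.sqrt (2 + Real.sqrt 2) - 1

noncomputable def u3 : ℝ := 1 + Real.sqrt 2 - Real.sqrt (2 + Real.sqrt 2)

noncomputable def σ1 : ℝ := (1 - u1 ^ 2) + (1 - u2 ^ 2) + (1 - u3 ^ 2)

noncomputable def σ2 : ℝ :=
  (1 - u1 ^ 2) * (1 - u2 ^ 2) + (1 - u1 ^ 2) * (1 - u3 ^ 2) + (1 - u2 ^ 2) * (1 - u3 ^ 2)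

noncomputable def σ3 : ℝ := (1 - u1 ^ 2) * (1 - u2 ^ 2) * (1 - u3 ^ 2)

/-- The resolvent function `f` of the quartic G⁰ interpolation problem
(equation (6) of the paper). -/
noncomputable def quarticF (c s x : ℝ) : ℝ :=
  (1 / 16) * (((σ3 / 64) * x ^ 2 + (c / 4) * x - s ^ 2) ^ 2
      - (1 / 16) * (1 - σ2 + 2 * σ3) * c ^ 2 * x ^ 2
      + (1 / 16) * (2 - σ1) * x ^ 2 - c * (x - 8 * c)) ^ 2
    - (64 + u1 ^ 2 * u2 ^ 2 * u3 ^ 2 * x ^ 2)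
      * (x / 32 - c / 8 - c ^ 3 / 8 + (σ3 / 512) * c * x ^ 2) ^ 2

lemma sqrt_two_le_sqrt_two_add_sqrt_two : √2 ≤ √(2 + √2) :=
  Real.sqrt_le_sqrt (by linarith [Real.sqrt_nonneg 2])

lemma sqrt_two_add_sqrt_two_le_two : √(2 + √2) ≤ 2 := by
  have : √2 ≤ 2 := (Real.sqrt_le_left zero_le_two).2 (by norm_num)
  exact (Real.sqrt_le_left zero_le_two).2 (by linarith)

lemma abs_u1_le_one : |u1| ≤ 1 := by
  have h0 : (0 : ℝ) ≤ √2 := Real.sqrt_nonneg 2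
  have hlo : √2 ≤ √(2 * (2 + √2)) := Real.sqrt_le_sqrt (by linarith)
  have hhi : √(2 * (2 + √2)) ≤ 2 + √2 :=
    (Real.sqrt_le_left (by positivity)).2 (by nlinarith [Real.sq_sqrt zero_le_two])
  rw [abs_le, u1]
  constructor <;> linarith

lemma abs_u2_le_one : |u2| ≤ 1 := by
  have := sqrt_two_le_sqrt_two_add_sqrt_two
  have := sqrt_two_add_sqrt_two_le_two
  rw [abs_le, u2]
  constructor <;> linarith [Real.sqrt_nonneg 2]

lemma abs_u3_le_one : |u3| ≤ 1 := by
  have := sqrt_two_le_sqrt_two_add_sqrt_two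
  have := sqrt_two_add_sqrt_two_le_two
  rw [abs_le, u3]
  constructor <;> linarith [Real.sqrt_nonneg 2]

lemma sq_mem_unitInterval {u : ℝ} (h : |u| ≤ 1) : u ^ 2 ∈ unitInterval :=
  ⟨sq_nonneg u, (sq_le_one_iff_abs_le_one u).2 h⟩

lemma one_sub_sq_mem_unitInterval {u : ℝ} (h : |u| ≤ 1) : 1 - u ^ 2 ∈ unitInterval :=
  Set.Icc.mem_iff_one_sub_mem.mp (sq_mem_unitInterval h)

lemma σ1_mem_Icc : σ1 ∈ Set.Icc 0 3 := by
  have h1 := one_sub_sq_mem_unitInterval abs_u1_le_one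
  have h2 := one_sub_sq_mem_unitInterval abs_u2_le_one
  have h3 := one_sub_sq_mem_unitInterval abs_u3_le_one
  unfold σ1
  constructor <;> linarith [h1.1, h1.2, h2.1, h2.2, h3.1, h3.2]

lemma σ2_mem_Icc : σ2 ∈ Set.Icc 0 3 := by
  have h1 := one_sub_sq_mem_unitInterval abs_u1_le_one
  have h2 := one_sub_sq_mem_unitInterval abs_u2_le_one
  have h3 := one_sub_sq_mem_unitInterval abs_u3_le_one
  have h12 := unitInterval.mul_mem h1 h2
  have h13 := unitInterval.mul_mem h1 h3
  have h23 := unitInterval.mul_mem h2 h3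
  unfold σ2
  constructor <;> linarith [h12.1, h12.2, h13.1, h13.2, h23.1, h23.2]

lemma σ3_mem_unitInterval : σ3 ∈ unitInterval :=
  unitInterval.mul_mem (unitInterval.mul_mem (one_sub_sq_mem_unitInterval abs_u1_le_one)
    (one_sub_sq_mem_unitInterval abs_u2_le_one)) (one_sub_sq_mem_unitInterval abs_u3_le_one)

lemma u_prod_sq_mem_unitInterval : u1 ^ 2 * u2 ^ 2 * u3 ^ 2 ∈ unitInterval :=
  unitInterval.mul_mem (unitInterval.mul_mem (sq_mem_unitInterval abs_u1_le_one)
    (sq_mem_unitInterval abs_u2_le_one)) (sq_mem_unitInterval abs_u3_le_one)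

noncomputable def oddCoeff2 (c : ℝ) : ℝ :=
  -3 / 64 + u1 ^ 2 * u2 ^ 2 * u3 ^ 2 / 64 - σ3 / 512 + 3 * σ1 / 128
    + c ^ 2 * (1 / 64 + u1 ^ 2 * u2 ^ 2 * u3 ^ 2 / 64 + 11 * σ3 / 256 - 3 * σ2 / 128 - σ1 / 128)
    + c ^ 4 * (σ2 / 128 - 5 * σ3 / 512)

noncomputable def oddCoeff4 (c : ℝ) : ℝ :=
  σ3 / 4096 - σ3 * (u1 ^ 2 * u2 ^ 2 * u3 ^ 2) / 4096 - 5 * σ3 ^ 2 / 32768 - σ1 * σ3 / 8192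
    + c ^ 2 * (σ2 * σ3 / 8192 - 5 * σ3 ^ 2 / 32768)

noncomputable def oddFactor (c x : ℝ) : ℝ :=
  (1 - c ^ 2) ^ 2 * (5 + c ^ 2) / 8 + oddCoeff2 c * x ^ 2 + oddCoeff4 c * x ^ 4
    + σ3 ^ 3 / 2 ^ 21 * x ^ 6

lemma quarticF_sub_quarticF_neg {c s : ℝ} (hs : s ^ 2 = 1 - c ^ 2) (x : ℝ) :
    quarticF c s x - quarticF c s (-x) = c * x * oddFactor c x := by
  simp only [quarticF, oddFactor, oddCoeff2, oddCoeff4, hs]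
  ring

lemma neg_quarter_le_oddCoeff2 {c : ℝ} (hc : c ^ 2 ≤ 1) : -1 / 4 ≤ oddCoeff2 c := by
  obtain ⟨h1l, h1u⟩ := σ1_mem_Icc
  obtain ⟨h2l, h2u⟩ := σ2_mem_Icc
  obtain ⟨h3l, h3u⟩ := σ3_mem_unitInterval
  obtain ⟨hUl, -⟩ := u_prod_sq_mem_unitInterval
  have hc0 := sq_nonneg c
  have hc4 : c ^ 4 ≤ c ^ 2 := by nlinarith
  unfold oddCoeff2
  nlinarith [mul_nonneg hc0 h3l, mul_nonneg hc0 hUl, mul_nonneg (pow_nonneg hc0 2) h2l,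
    mul_le_mul_of_nonneg_left h2u hc0, mul_le_mul_of_nonneg_left h1u hc0,
    mul_le_mul_of_nonneg_left h3u (pow_nonneg hc0 2)]

lemma neg_quarter_le_oddCoeff4 {c : ℝ} (hc : c ^ 2 ≤ 1) : -1 / 4 ≤ oddCoeff4 c := by
  obtain ⟨h1l, h1u⟩ := σ1_mem_Icc
  obtain ⟨h2l, -⟩ := σ2_mem_Icc
  obtain ⟨h3l, h3u⟩ := σ3_mem_unitInterval
  obtain ⟨hUl, hUu⟩ := u_prod_sq_mem_unitInterval
  have hc0 := sq_nonneg c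
  have hσ3sq : σ3 ^ 2 ≤ 1 := pow_le_one₀ h3l h3u
  unfold oddCoeff4
  nlinarith [mul_nonneg hc0 (mul_nonneg h2l h3l), mul_le_mul h1u h3u h3l (by norm_num),
    mul_le_mul h3u hUu hUl zero_le_one, mul_le_mul_of_nonneg_left hσ3sq hc0]

lemma oddFactor_pos {c x : ℝ} (hc : c ^ 2 < 1) (hx : |x| ≤ 1 - c ^ 2) : 0 < oddFactor c x := by
  have hx2 : x ^ 2 ≤ (1 - c ^ 2) ^ 2 := sq_abs x ▸ pow_le_pow_left₀ (abs_nonneg x) hx 2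
  have hx1 : x ^ 2 ≤ 1 := hx2.trans (pow_le_one₀ (by linarith [abs_nonneg x]) (by nlinarith))
  have hx4 : x ^ 4 ≤ x ^ 2 := by nlinarith [mul_le_mul_of_nonneg_left hx1 (sq_nonneg x)]
  have h2 := mul_le_mul_of_nonneg_right (neg_quarter_le_oddCoeff2 hc.le) (sq_nonneg x)
  have h4 :=
    mul_le_mul_of_nonneg_right (neg_quarter_le_oddCoeff4 hc.le) (pow_nonneg (sq_nonneg x) 2)
  have h6 : 0 ≤ σ3 ^ 3 / 2 ^ 21 * x ^ 6 := by
    have := σ3_mem_unitInterval.1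
    positivity
  have hpos : 0 < (1 - c ^ 2) ^ 2 := by nlinarith
  unfold oddFactor
  nlinarith [mul_nonneg hpos.le (sq_nonneg c), show x ^ 4 = (x ^ 2) ^ 2 by ring]

/-- Part of Lemma 3 of the paper: for `c ∈ (0,1)` and `s = √(1−c²)`, the resolvent
function satisfies `f(x) > f(−x)` for all `x ∈ (0, (1−c)²]`. -/
theorem stmt_15 (c : ℝ) (hc : c ∈ Set.Ioo (0 : ℝ) 1) (s : ℝ)
    (hs : s = Real.sqrt (1 - c ^ 2)) :
    ∀ x ∈ Set.Ioc (0 : ℝ) ((1 - c) ^ 2), quarticF c s (-x) < quarticF c s x := by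
  obtain ⟨hc0, hc1⟩ := hc
  rintro x ⟨hx0, hx⟩
  have hc2 : c ^ 2 < 1 := by nlinarith
  have hs2 : s ^ 2 = 1 - c ^ 2 := hs ▸ Real.sq_sqrt (by linarith)
  have hx_le : |x| ≤ 1 - c ^ 2 := by rw [abs_of_pos hx0]; nlinarith
  have hodd := mul_pos (mul_pos hc0 hx0) (oddFactor_pos hc2 hx_le)
  linarith [quarticF_sub_quarticF_neg hs2 x]
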